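/- Assume R₀ := BᵀB + σ²·B̄ᵀB̄ is positive definite. Let (τ_k)_{k≥1} ⊂ (0,1) with τ_k → 0, and for each k let P^(τ_k) be a symmetric positive definite matrix with Tr P^(τ_k) = 1 satisfying Φ̂_{τ_k}(P^(τ_k)) = P^(τ_k); set γ^(τ_k) := Tr((1−τ_k)·Φ(P^(τ_k)) + (τ_k/n)·I). Suppose P^(τ_k) → P* for some symmetric positive definite matrix P*. Then γ^(τ_k)/(1−τ_k) − L(P^(τ_k)) → 0 as k → ∞. -/

import Mathlib

open Matrix MeasureTheory ProbabilityTheory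
open scoped ENNReal Classical

noncomputable section

namespace SCS

/-! ### Matrix-analytic definitions -/

/-- Rayleigh-quotient definition of the largest eigenvalue of a symmetric matrix. -/
def lamMax {n : ℕ} (M : Matrix (Fin n) (Fin n) ℝ) : ℝ :=
  ⨆ x : {x : Fin n → ℝ // x ⬝ᵥ x = 1}, x.1 ⬝ᵥ M.mulVec x.1

/-- Rayleigh-quotient definition of the smallest eigenvalue of a symmetric matrix. -/
def lamMin {n : ℕ} (M : Matrix (Fin n) (Fin n) ℝ) : ℝ :=
  ⨅ x : {x : Fin n → ℝ // x ⬝ᵥ x = 1}, x.1 ⬝ᵥ M.mulVec x.1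

/-- Spectral norm (the operator norm induced by the Euclidean norm). -/
def specNorm {p q : ℕ} (M : Matrix (Fin p) (Fin q) ℝ) : ℝ :=
  Real.sqrt (lamMax (Mᵀ * M))

variable {n m : ℕ}

/-- `R(P) = BᵀPB + σ²·B̄ᵀPB̄`. -/
def Rop (σ : ℝ) (B Bbar : Matrix (Fin n) (Fin m) ℝ) (P : Matrix (Fin n) (Fin n) ℝ) :
    Matrix (Fin m) (Fin m) ℝ :=
  Bᵀ * P * B + σ ^ 2 • (Bbarᵀ * P * Bbar)

/-- `S(P) = AᵀPB + σ²·ĀᵀPB̄`. -/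
def Sop (σ : ℝ) (A Abar : Matrix (Fin n) (Fin n) ℝ) (B Bbar : Matrix (Fin n) (Fin m) ℝ)
    (P : Matrix (Fin n) (Fin n) ℝ) : Matrix (Fin n) (Fin m) ℝ :=
  Aᵀ * P * B + σ ^ 2 • (Abarᵀ * P * Bbar)

/-- `Φ(P) = AᵀPA + σ²·ĀᵀPĀ − S(P)·R(P)⁻¹·S(P)ᵀ`. -/
def Phi (σ : ℝ) (A Abar : Matrix (Fin n) (Fin n) ℝ) (B Bbar : Matrix (Fin n) (Fin m) ℝ)
    (P : Matrix (Fin n) (Fin n) ℝ) : Matrix (Fin n) (Fin n) ℝ :=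
  Aᵀ * P * A + σ ^ 2 • (Abarᵀ * P * Abar)
    - Sop σ A Abar B Bbar P * (Rop σ B Bbar P)⁻¹ * (Sop σ A Abar B Bbar P)ᵀ

/-- `K(P) = R(P)⁻¹·S(P)ᵀ`. -/
def Kgain (σ : ℝ) (A Abar : Matrix (Fin n) (Fin n) ℝ) (B Bbar : Matrix (Fin n) (Fin m) ℝ)
    (P : Matrix (Fin n) (Fin n) ℝ) : Matrix (Fin m) (Fin n) ℝ :=
  (Rop σ B Bbar P)⁻¹ * (Sop σ A Abar B Bbar P)ᵀ

/-- `C_A = λ_max(AAᵀ + σ²·ĀĀᵀ)`. -/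
def CA (σ : ℝ) (A Abar : Matrix (Fin n) (Fin n) ℝ) : ℝ :=
  lamMax (A * Aᵀ + σ ^ 2 • (Abar * Abarᵀ))

/-- `δ_τ = (τ/n)/((1−τ)·C_A + τ)`. -/
def deltaTau (σ : ℝ) (A Abar : Matrix (Fin n) (Fin n) ℝ) (τ : ℝ) : ℝ :=
  (τ / (n : ℝ)) / ((1 - τ) * CA σ A Abar + τ)

/-- The regularized normalized operator
`Φ̂_τ(P) = ((1−τ)·Φ(P) + (τ/n)·I) / Tr((1−τ)·Φ(P) + (τ/n)·I)`. -/
def PhiHat (σ : ℝ) (A Abar : Matrix (Fin n) (Fin n) ℝ) (B Bbar : Matrix (Fin n) (Fin m) ℝ)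
    (τ : ℝ) (P : Matrix (Fin n) (Fin n) ℝ) : Matrix (Fin n) (Fin n) ℝ :=
  (Matrix.trace ((1 - τ) • Phi σ A Abar B Bbar P
      + (τ / (n : ℝ)) • (1 : Matrix (Fin n) (Fin n) ℝ)))⁻¹ •
    ((1 - τ) • Phi σ A Abar B Bbar P + (τ / (n : ℝ)) • (1 : Matrix (Fin n) (Fin n) ℝ))

/-- Inverse of the positive-semidefinite square root (junk value `0` off the PSD cone),
so `invSqrt P = P^{−1/2}` for positive definite `P`. -/
def invSqrt {n : ℕ} (P : Matrix (Fin n) (Fin n) ℝ) : Matrix (Fin n) (Fin n) ℝ :=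
  if h : P.PosSemidef then
    (h.1.eigenvectorUnitary.1 * diagonal (((↑) : ℝ → ℝ) ∘ Real.sqrt ∘ h.1.eigenvalues) *
      (star h.1.eigenvectorUnitary : Matrix (Fin n) (Fin n) ℝ))⁻¹ else 0

/-- `L(P) = λ_min(P^{−1/2}·Φ(P)·P^{−1/2})`. -/
def Lval (σ : ℝ) (A Abar : Matrix (Fin n) (Fin n) ℝ) (B Bbar : Matrix (Fin n) (Fin m) ℝ)
    (P : Matrix (Fin n) (Fin n) ℝ) : ℝ :=
  lamMin (invSqrt P * Phi σ A Abar B Bbar P * invSqrt P)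

/-- `U(P) = λ_max(P^{−1/2}·Φ(P)·P^{−1/2})`. -/
def Uval (σ : ℝ) (A Abar : Matrix (Fin n) (Fin n) ℝ) (B Bbar : Matrix (Fin n) (Fin m) ℝ)
    (P : Matrix (Fin n) (Fin n) ℝ) : ℝ :=
  lamMax (invSqrt P * Phi σ A Abar B Bbar P * invSqrt P)

/-- The trace-normalized slice `S_a = {X symmetric : X ⪰ a·I, Tr X = 1}`. -/
def Slice (a : ℝ) : Set (Matrix (Fin n) (Fin n) ℝ) :=
  {X | X.IsSymm ∧ (X - a • (1 : Matrix (Fin n) (Fin n) ℝ)).PosSemidef ∧ X.trace = 1}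

/-- `α_A = ‖A‖² + σ²·‖Ā‖²` (spectral norms). -/
def alphaA (σ : ℝ) (A Abar : Matrix (Fin n) (Fin n) ℝ) : ℝ :=
  specNorm A ^ 2 + σ ^ 2 * specNorm Abar ^ 2

/-- `α_S = ‖A‖·‖B‖ + σ²·‖Ā‖·‖B̄‖`. -/
def alphaS (σ : ℝ) (A Abar : Matrix (Fin n) (Fin n) ℝ) (B Bbar : Matrix (Fin n) (Fin m) ℝ) : ℝ :=
  specNorm A * specNorm B + σ ^ 2 * specNorm Abar * specNorm Bbar

/-- `α_R = ‖B‖² + σ²·‖B̄‖²`. -/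
def alphaR (σ : ℝ) (B Bbar : Matrix (Fin n) (Fin m) ℝ) : ℝ :=
  specNorm B ^ 2 + σ ^ 2 * specNorm Bbar ^ 2

/-- `c_R(a) = 1/(a·λ_min(R₀))`. -/
def cR (σ : ℝ) (B Bbar : Matrix (Fin n) (Fin m) ℝ) (a : ℝ) : ℝ :=
  1 / (a * lamMin (Bᵀ * B + σ ^ 2 • (Bbarᵀ * Bbar)))

/-- `L_Φ(a) = α_A + 2·α_S²·c_R(a) + α_S²·α_R·c_R(a)²`. -/
def LPhi (σ : ℝ) (A Abar : Matrix (Fin n) (Fin n) ℝ) (B Bbar : Matrix (Fin n) (Fin m) ℝ)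
    (a : ℝ) : ℝ :=
  alphaA σ A Abar + 2 * alphaS σ A Abar B Bbar ^ 2 * cR σ B Bbar a
    + alphaS σ A Abar B Bbar ^ 2 * alphaR σ B Bbar * cR σ B Bbar a ^ 2

/-- `C_Φ(a) = α_A + α_S²·c_R(a)`. -/
def CPhi (σ : ℝ) (A Abar : Matrix (Fin n) (Fin n) ℝ) (B Bbar : Matrix (Fin n) (Fin m) ℝ)
    (a : ℝ) : ℝ :=
  alphaA σ A Abar + alphaS σ A Abar B Bbar ^ 2 * cR σ B Bbar a

/-- The contraction modulus `Λ(τ)`. -/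
def LambdaTau (σ : ℝ) (A Abar : Matrix (Fin n) (Fin n) ℝ) (B Bbar : Matrix (Fin n) (Fin m) ℝ)
    (τ : ℝ) : ℝ :=
  (1 - τ) * LPhi σ A Abar B Bbar (deltaTau σ A Abar τ) / τ
    + (1 - τ) * ((1 - τ) * CPhi σ A Abar B Bbar (deltaTau σ A Abar τ) + τ / (n : ℝ))
        * (n : ℝ) * LPhi σ A Abar B Bbar (deltaTau σ A Abar τ) / τ ^ 2

/-- The directional derivative `DΦ(P)[H]`. -/
def DPhi (σ : ℝ) (A Abar : Matrix (Fin n) (Fin n) ℝ) (B Bbar : Matrix (Fin n) (Fin m) ℝ)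
    (P H : Matrix (Fin n) (Fin n) ℝ) : Matrix (Fin n) (Fin n) ℝ :=
  Aᵀ * H * A + σ ^ 2 • (Abarᵀ * H * Abar)
    - (Aᵀ * H * B + σ ^ 2 • (Abarᵀ * H * Bbar)) * (Rop σ B Bbar P)⁻¹ * (Sop σ A Abar B Bbar P)ᵀ
    - Sop σ A Abar B Bbar P * (Rop σ B Bbar P)⁻¹ * (Bᵀ * H * A + σ ^ 2 • (Bbarᵀ * H * Abar))
    + Sop σ A Abar B Bbar P * (Rop σ B Bbar P)⁻¹ * (Bᵀ * H * B + σ ^ 2 • (Bbarᵀ * H * Bbar))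
        * (Rop σ B Bbar P)⁻¹ * (Sop σ A Abar B Bbar P)ᵀ

/-- `s_τ(P) = Tr((1−τ)·Φ(P) + (τ/n)·I)`. -/
def sTau (σ : ℝ) (A Abar : Matrix (Fin n) (Fin n) ℝ) (B Bbar : Matrix (Fin n) (Fin m) ℝ)
    (τ : ℝ) (P : Matrix (Fin n) (Fin n) ℝ) : ℝ :=
  Matrix.trace ((1 - τ) • Phi σ A Abar B Bbar P + (τ / (n : ℝ)) • (1 : Matrix (Fin n) (Fin n) ℝ))

/-- The directional derivative
`DΦ̂_τ(P)[H] = ((1−τ)/s_τ(P))·(DΦ(P)[H] − Φ̂_τ(P)·Tr(DΦ(P)[H]))`. -/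
def DPhiHat (σ : ℝ) (A Abar : Matrix (Fin n) (Fin n) ℝ) (B Bbar : Matrix (Fin n) (Fin m) ℝ)
    (τ : ℝ) (P H : Matrix (Fin n) (Fin n) ℝ) : Matrix (Fin n) (Fin n) ℝ :=
  ((1 - τ) / sTau σ A Abar B Bbar τ P) •
    (DPhi σ A Abar B Bbar P H
      - Matrix.trace (DPhi σ A Abar B Bbar P H) • PhiHat σ A Abar B Bbar τ P)

/-- The local Lipschitz modulus `Lip(P,τ) = sup{‖DΦ̂_τ(P)[H]‖ : H symmetric, ‖H‖ = 1}`. -/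
def LipMod (σ : ℝ) (A Abar : Matrix (Fin n) (Fin n) ℝ) (B Bbar : Matrix (Fin n) (Fin m) ℝ)
    (τ : ℝ) (P : Matrix (Fin n) (Fin n) ℝ) : ℝ :=
  ⨆ H : {H : Matrix (Fin n) (Fin n) ℝ // H.IsSymm ∧ specNorm H = 1},
    specNorm (DPhiHat σ A Abar B Bbar τ P H.1)

/-! ### Probabilistic definitions -/

/-- The Gaussian measure on `ℝ` with mean `0` and variance `σ²`. -/
def gauss (σ : ℝ) : Measure ℝ := gaussianReal 0 ⟨σ ^ 2, sq_nonneg σ⟩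

/-- The Gaussian expectation `E_ω[((A+Āω)x + (B+B̄ω)v)ᵀ·P·((A+Āω)x + (B+B̄ω)v)]`. -/
def qform (σ : ℝ) (A Abar : Matrix (Fin n) (Fin n) ℝ) (B Bbar : Matrix (Fin n) (Fin m) ℝ)
    (P : Matrix (Fin n) (Fin n) ℝ) (x : Fin n → ℝ) (v : Fin m → ℝ) : ℝ :=
  ∫ s, (((A + s • Abar).mulVec x + (B + s • Bbar).mulVec v) ⬝ᵥ
      P.mulVec ((A + s • Abar).mulVec x + (B + s • Bbar).mulVec v)) ∂(gauss σ)

/-- The data of the stochastic control system: a probability space `(Ω, F, Pr)`,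
system matrices `A, Ā, B, B̄`, a noise level `σ > 0`, an i.i.d. sequence `w` of
Gaussian random variables with mean `0` and variance `σ²`, and a sub-σ-algebra `G`
independent of the noise. -/
structure Ctx (n m : ℕ) (Ω : Type) [mΩ : MeasurableSpace Ω] where
  Pr : Measure Ω
  isProb : IsProbabilityMeasure Pr
  σ : ℝ
  hσ : 0 < σ
  A : Matrix (Fin n) (Fin n) ℝ
  Abar : Matrix (Fin n) (Fin n) ℝ
  B : Matrix (Fin n) (Fin m) ℝ
  Bbar : Matrix (Fin n) (Fin m) ℝ
  w : ℕ → Ω → ℝ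
  hw_meas : ∀ k, Measurable (w k)
  hw_gauss : ∀ k, Pr.map (w k) = gauss σ
  hw_iid : iIndepFun w Pr
  G : MeasurableSpace Ω
  hG : G ≤ mΩ
  hw_indep_G : Indep (⨆ k, MeasurableSpace.comap (w k) inferInstance) G Pr

variable {Ω : Type} [MeasurableSpace Ω]

/-- The filtration `F_k = G ∨ σ(ω₀, …, ω_{k−1})`. -/
def Ctx.Fk (C : Ctx n m Ω) (k : ℕ) : MeasurableSpace Ω :=
  C.G ⊔ ⨆ i ∈ Finset.range k, MeasurableSpace.comap (C.w i) inferInstance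

/-- Admissible policies: `u_k` is `F_k`-measurable and square-integrable. -/
def Ctx.Admissible (C : Ctx n m Ω) (u : ℕ → Ω → Fin m → ℝ) : Prop :=
  ∀ k, Measurable[C.Fk k] (u k) ∧ MemLp (u k) 2 C.Pr

/-- Admissible initial states: `G`-measurable and square-integrable. -/
def Ctx.InitOK (C : Ctx n m Ω) (x : Ω → Fin n → ℝ) : Prop :=
  Measurable[C.G] x ∧ MemLp x 2 C.Pr

/-- The state trajectory `x_{k+1} = (A + Ā·ω_k)x_k + (B + B̄·ω_k)u_k`. -/
def Ctx.traj (C : Ctx n m Ω) (x0 : Ω → Fin n → ℝ) (u : ℕ → Ω → Fin m → ℝ) :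
    ℕ → Ω → Fin n → ℝ
  | 0 => x0
  | k + 1 => fun s =>
      (C.A + C.w k s • C.Abar).mulVec (C.traj x0 u k s)
      + (C.B + C.w k s • C.Bbar).mulVec (u k s)

/-- `E[xᵀx]`. -/
def msSq {n : ℕ} (Pr : Measure Ω) (x : Ω → Fin n → ℝ) : ℝ := ∫ s, x s ⬝ᵥ x s ∂Pr

/-- The mean-square norm `‖x‖_ms = (E[xᵀx])^{1/2}`. -/
def msNorm {n : ℕ} (Pr : Measure Ω) (x : Ω → Fin n → ℝ) : ℝ := Real.sqrt (msSq Pr x)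

/-- The mean-square stabilizing rate `ρ(u)` of a policy. -/
def Ctx.rate (C : Ctx n m Ω) (u : ℕ → Ω → Fin m → ℝ) : ℝ :=
  sInf {ρ : ℝ | 0 ≤ ρ ∧ ∃ κ : ℝ, 0 ≤ κ ∧ ∀ x0, C.InitOK x0 → ∀ k : ℕ,
    msSq C.Pr (C.traj x0 u k) ≤ κ * ρ ^ (2 * k) * msSq C.Pr x0}

/-- The optimal stabilizing rate `ρ* = inf_{u ∈ U} ρ(u)`. -/
def Ctx.rhoStar (C : Ctx n m Ω) : ℝ :=
  sInf {r : ℝ | ∃ u, C.Admissible u ∧ r = C.rate u}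

/-- `η(x) = inf_{u ∈ U} sup_{k ∈ ℕ} ‖x_k‖_ms/(ρ*)^k` (with values in `[0,∞]`). -/
def Ctx.eta (C : Ctx n m Ω) (x : Ω → Fin n → ℝ) : ℝ≥0∞ :=
  ⨅ (u : ℕ → Ω → Fin m → ℝ) (_ : C.Admissible u),
    ⨆ k : ℕ, ENNReal.ofReal (msNorm C.Pr (C.traj x u k) / C.rhoStar ^ k)

/-- The per-trajectory mean-square stabilizing rate `ρ(u; x₀)`. -/
def Ctx.rateAt (C : Ctx n m Ω) (x0 : Ω → Fin n → ℝ) (u : ℕ → Ω → Fin m → ℝ) : ℝ :=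
  sInf {ρ : ℝ | 0 ≤ ρ ∧ ∃ κ : ℝ, 0 ≤ κ ∧ ∀ k : ℕ,
    msSq C.Pr (C.traj x0 u k) ≤ κ * ρ ^ (2 * k) * msSq C.Pr x0}

/-- The cost `J(x₀,u) = limsup_k (1/k)·log(E[x_kᵀx_k]/E[x₀ᵀx₀])`. -/
def Ctx.J (C : Ctx n m Ω) (x0 : Ω → Fin n → ℝ) (u : ℕ → Ω → Fin m → ℝ) : ℝ :=
  Filter.limsup
    (fun k : ℕ => (1 / (k : ℝ)) * Real.log (msSq C.Pr (C.traj x0 u k) / msSq C.Pr x0))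
    Filter.atTop

/-- Feedback policies: `u_k = μ_k(x_k)` for Borel-measurable `μ_k`. -/
def Ctx.IsFeedback (C : Ctx n m Ω) (x0 : Ω → Fin n → ℝ) (u : ℕ → Ω → Fin m → ℝ) : Prop :=
  ∃ μ : ℕ → (Fin n → ℝ) → Fin m → ℝ, (∀ k, Measurable (μ k)) ∧
    ∀ k s, u k s = μ k (C.traj x0 u k s)

/-- The closed-loop trajectory under a stationary feedback law `μ`. -/
def Ctx.fbTraj (C : Ctx n m Ω) (x0 : Ω → Fin n → ℝ) (μ : (Fin n → ℝ) → Fin m → ℝ) :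
    ℕ → Ω → Fin n → ℝ
  | 0 => x0
  | k + 1 => fun s =>
      (C.A + C.w k s • C.Abar).mulVec (C.fbTraj x0 μ k s)
      + (C.B + C.w k s • C.Bbar).mulVec (μ (C.fbTraj x0 μ k s))

/-- The stationary policy `u* given by `u*_k = μ(x*_k)` along its own closed-loop
trajectory, for a stationary feedback law `μ`. -/
def Ctx.fbPolicy (C : Ctx n m Ω) (x0 : Ω → Fin n → ℝ) (μ : (Fin n → ℝ) → Fin m → ℝ) :
    ℕ → Ω → Fin m → ℝ :=
  fun k s => μ (C.fbTraj x0 μ k s)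

/-- The linear feedback policy `u*_k = −K·x*_k` along its own trajectory. -/
def Ctx.linFbPolicy (C : Ctx n m Ω) (x0 : Ω → Fin n → ℝ) (K : Matrix (Fin m) (Fin n) ℝ) :
    ℕ → Ω → Fin m → ℝ :=
  C.fbPolicy x0 (fun x => -(K.mulVec x))

/-- `ξ_♯(x) = inf_{v ∈ ℝ^m} ‖(A + Ā·ω)x + (B + B̄·ω)v‖_ms`, realized with `ω = ω₀`. -/
def Ctx.xiSharp (C : Ctx n m Ω) (x : Ω → Fin n → ℝ) : ℝ :=
  ⨅ v : Fin m → ℝ, msNorm C.Pr (fun s =>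
    (C.A + C.w 0 s • C.Abar).mulVec (x s) + (C.B + C.w 0 s • C.Bbar).mulVec v)

/-- Extended-real logarithm: `log t` for `t > 0` and `−∞` for `t ≤ 0`. -/
def elog (t : ℝ) : EReal := if t ≤ 0 then ⊥ else ((Real.log t : ℝ) : EReal)

/-- The cost `J(x₀,u)` interpreted with values in `[−∞,∞]`. -/
def Ctx.Je (C : Ctx n m Ω) (x0 : Ω → Fin n → ℝ) (u : ℕ → Ω → Fin m → ℝ) : EReal :=
  Filter.limsup
    (fun k : ℕ => ((1 / (k : ℝ) : ℝ) : EReal) * elog (msSq C.Pr (C.traj x0 u k) / msSq C.Pr x0))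
    Filter.atTop

/-! At a fixed point of `Φ̂_τ` with `Tr P = 1` we have `(1−τ)·Φ(P) + (τ/n)·I = γ·P`, hence
`P^{−1/2}·Φ(P)·P^{−1/2} = (γ/(1−τ))·I − (τ/(n(1−τ)))·P⁻¹`. Its smallest eigenvalue is within
`τ/(n(1−τ))·∑ᵢⱼ |(P⁻¹)ᵢⱼ|` of `γ/(1−τ)`, and `P_k⁻¹` stays bounded because `P_k → P*` with `P*`
invertible. -/

open Filter Topology

section InvSqrt

variable {n : ℕ} {P : Matrix (Fin n) (Fin n) ℝ}

lemma invSqrt_eq_inv_cfc_sqrt (hP : P.PosSemidef) : invSqrt P = (cfc Real.sqrt P)⁻¹ := by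
  rw [invSqrt, dif_pos hP, hP.1.cfc_eq, IsHermitian.cfc, Unitary.conjStarAlgAut_apply]
  rfl

lemma cfc_sqrt_mul_cfc_sqrt (hP : P.PosSemidef) : cfc Real.sqrt P * cfc Real.sqrt P = P := by
  rw [← cfc_mul Real.sqrt Real.sqrt P]
  conv_rhs => rw [← cfc_id' ℝ P hP.1]
  refine cfc_congr fun x hx => Real.mul_self_sqrt ?_
  rw [hP.1.spectrum_real_eq_range_eigenvalues] at hx
  obtain ⟨i, rfl⟩ := hx
  exact hP.eigenvalues_nonneg i

lemma isUnit_det_cfc_sqrt (hP : P.PosDef) : IsUnit (cfc Real.sqrt P).det := by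
  refine isUnit_iff_ne_zero.mpr fun h => hP.det_pos.ne' ?_
  rw [← cfc_sqrt_mul_cfc_sqrt hP.posSemidef, det_mul, h, zero_mul]

lemma invSqrt_mul_self_mul_invSqrt (hP : P.PosDef) : invSqrt P * P * invSqrt P = 1 := by
  have hS := isUnit_det_cfc_sqrt hP
  have hSS := cfc_sqrt_mul_cfc_sqrt hP.posSemidef
  rw [invSqrt_eq_inv_cfc_sqrt hP.posSemidef]
  set S := cfc Real.sqrt P
  rw [← hSS, ← mul_assoc, nonsing_inv_mul _ hS, one_mul, mul_nonsing_inv _ hS]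

lemma invSqrt_mul_invSqrt (hP : P.PosDef) : invSqrt P * invSqrt P = P⁻¹ := by
  have hSS := cfc_sqrt_mul_cfc_sqrt hP.posSemidef
  rw [invSqrt_eq_inv_cfc_sqrt hP.posSemidef]
  set S := cfc Real.sqrt P
  rw [← hSS, Matrix.mul_inv_rev]

lemma invSqrt_mul_smul_sub_smul_one_mul_invSqrt (hP : P.PosDef) (a b : ℝ) :
    invSqrt P * (a • P - b • 1) * invSqrt P = a • 1 - b • P⁻¹ := by
  simp only [Matrix.mul_sub, Matrix.sub_mul, Matrix.mul_smul, Matrix.smul_mul, Matrix.mul_one,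
    invSqrt_mul_self_mul_invSqrt hP, invSqrt_mul_invSqrt hP]

end InvSqrt

lemma abs_dotProduct_mulVec_le_sum_abs {ι : Type*} [Fintype ι] {x : ι → ℝ} (hx : x ⬝ᵥ x = 1)
    (Q : Matrix ι ι ℝ) : |x ⬝ᵥ Q *ᵥ x| ≤ ∑ i, ∑ j, |Q i j| := by
  have hx_le : ∀ i, |x i| ≤ 1 := fun i => by
    rw [abs_le_one_iff_mul_self_le_one, ← hx]
    exact Finset.single_le_sum (fun j _ => mul_self_nonneg (x j)) (Finset.mem_univ i)
  have hsum : x ⬝ᵥ Q *ᵥ x = ∑ i, ∑ j, x i * Q i j * x j := by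
    simp only [dotProduct, mulVec, Finset.mul_sum, mul_assoc]
  rw [hsum]
  refine (Finset.abs_sum_le_sum_abs _ _).trans <| Finset.sum_le_sum fun i _ =>
    (Finset.abs_sum_le_sum_abs _ _).trans <| Finset.sum_le_sum fun j _ => ?_
  rw [abs_mul, abs_mul]
  calc |x i| * |Q i j| * |x j| ≤ 1 * |Q i j| * 1 := by gcongr <;> exact hx_le _
    _ = |Q i j| := by ring

lemma abs_lamMin_smul_one_sub_smul_sub_le {n : ℕ} (hn : 0 < n) (c d : ℝ)
    (Q : Matrix (Fin n) (Fin n) ℝ) :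
    |lamMin (c • (1 : Matrix (Fin n) (Fin n) ℝ) - d • Q) - c| ≤ |d| * ∑ i, ∑ j, |Q i j| := by
  set ε := |d| * ∑ i, ∑ j, |Q i j|
  have hclose : ∀ x : {x : Fin n → ℝ // x ⬝ᵥ x = 1},
      |x.1 ⬝ᵥ (c • (1 : Matrix (Fin n) (Fin n) ℝ) - d • Q) *ᵥ x.1 - c| ≤ ε := fun x => by
    rw [sub_mulVec, smul_mulVec, one_mulVec, smul_mulVec, dotProduct_sub, dotProduct_smul,
      dotProduct_smul, x.2, smul_eq_mul, smul_eq_mul, mul_one, sub_sub_cancel_left, abs_neg,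
      abs_mul]
    exact mul_le_mul_of_nonneg_left (abs_dotProduct_mulVec_le_sum_abs x.2 Q) (abs_nonneg d)
  let e : {x : Fin n → ℝ // x ⬝ᵥ x = 1} := ⟨Pi.single ⟨0, hn⟩ 1, by simp⟩
  have hbdd : BddBelow (Set.range fun x : {x : Fin n → ℝ // x ⬝ᵥ x = 1} =>
      x.1 ⬝ᵥ (c • (1 : Matrix (Fin n) (Fin n) ℝ) - d • Q) *ᵥ x.1) :=
    ⟨c - ε, by rintro _ ⟨x, rfl⟩; linarith [(abs_sub_le_iff.mp (hclose x)).2]⟩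
  have hle : lamMin (c • (1 : Matrix (Fin n) (Fin n) ℝ) - d • Q) ≤ _ := ciInf_le hbdd e
  have hge : c - ε ≤ lamMin (c • (1 : Matrix (Fin n) (Fin n) ℝ) - d • Q) :=
    have : Nonempty {x : Fin n → ℝ // x ⬝ᵥ x = 1} := ⟨e⟩
    le_ciInf fun x => by linarith [(abs_sub_le_iff.mp (hclose x)).2]
  rw [abs_sub_le_iff]
  constructor <;> linarith [(abs_sub_le_iff.mp (hclose e)).1]

section FixedPoint

variable {n m : ℕ} (σ : ℝ) (A Abar : Matrix (Fin n) (Fin n) ℝ) (B Bbar : Matrix (Fin n) (Fin m) ℝ)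
  {τ : ℝ} {P : Matrix (Fin n) (Fin n) ℝ}

lemma smul_phi_add_eq_sTau_smul_of_phiHat_eq (htr : P.trace = 1)
    (hfix : PhiHat σ A Abar B Bbar τ P = P) :
    (1 - τ) • Phi σ A Abar B Bbar P + (τ / n) • (1 : Matrix (Fin n) (Fin n) ℝ)
      = sTau σ A Abar B Bbar τ P • P := by
  change (sTau σ A Abar B Bbar τ P)⁻¹ • _ = P at hfix
  have hs : sTau σ A Abar B Bbar τ P ≠ 0 := fun hs => by
    rw [hs, _root_.inv_zero, zero_smul] at hfix
    simp [← hfix] at htr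
  simpa only [smul_smul, mul_inv_cancel₀ hs, one_smul] using
    congrArg (sTau σ A Abar B Bbar τ P • ·) hfix

lemma lval_eq_lamMin_of_phiHat_eq (hP : P.PosDef) (htr : P.trace = 1)
    (hfix : PhiHat σ A Abar B Bbar τ P = P) (hτ : τ ≠ 1) :
    Lval σ A Abar B Bbar P = lamMin ((sTau σ A Abar B Bbar τ P / (1 - τ)) • 1
      - (τ / n / (1 - τ)) • P⁻¹) := by
  have hτ' : 1 - τ ≠ 0 := sub_ne_zero.mpr hτ.symm
  have hphi : Phi σ A Abar B Bbar P = (sTau σ A Abar B Bbar τ P / (1 - τ)) • P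
      - (τ / n / (1 - τ)) • (1 : Matrix (Fin n) (Fin n) ℝ) := by
    have h := congrArg ((1 - τ)⁻¹ • ·)
      (smul_phi_add_eq_sTau_smul_of_phiHat_eq σ A Abar B Bbar htr hfix)
    simp only [smul_add, smul_smul, inv_mul_cancel₀ hτ', one_smul] at h
    rw [eq_sub_iff_add_eq, div_eq_inv_mul _ (1 - τ), div_eq_inv_mul _ (1 - τ), h]
  rw [Lval, hphi, invSqrt_mul_smul_sub_smul_one_mul_invSqrt hP]

end FixedPoint

theorem gap_tends_to_zero_general {n m : ℕ} (hn : 0 < n)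
    (σ : ℝ)
    (A Abar : Matrix (Fin n) (Fin n) ℝ) (B Bbar : Matrix (Fin n) (Fin m) ℝ)
    (τ : ℕ → ℝ) (hτmem : ∀ k, τ k ∈ Set.Ioo (0 : ℝ) 1)
    (hτ0 : Filter.Tendsto τ Filter.atTop (nhds 0))
    (P : ℕ → Matrix (Fin n) (Fin n) ℝ)
    (hPpd : ∀ k, (P k).PosDef) (hPtr : ∀ k, (P k).trace = 1)
    (hfix : ∀ k, PhiHat σ A Abar B Bbar (τ k) (P k) = P k)
    (γ : ℕ → ℝ)
    (hγ : ∀ k, γ k = Matrix.trace ((1 - τ k) • Phi σ A Abar B Bbar (P k)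
      + (τ k / (n : ℝ)) • (1 : Matrix (Fin n) (Fin n) ℝ)))
    (Pstar : Matrix (Fin n) (Fin n) ℝ) (hPstar : Pstar.PosDef)
    (hconv : Filter.Tendsto P Filter.atTop (nhds Pstar)) :
    Filter.Tendsto (fun k => γ k / (1 - τ k) - Lval σ A Abar B Bbar (P k))
      Filter.atTop (nhds 0) := by
  set d : ℕ → ℝ := fun k => τ k / n / (1 - τ k)
  set F : Matrix (Fin n) (Fin n) ℝ → ℝ := fun Q => ∑ i, ∑ j, |Q i j|
  have hgap (k : ℕ) : |γ k / (1 - τ k) - Lval σ A Abar B Bbar (P k)| ≤ |d k| * F (P k)⁻¹ := by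
    rw [abs_sub_comm, hγ k,
      lval_eq_lamMin_of_phiHat_eq σ A Abar B Bbar (hPpd k) (hPtr k) (hfix k) (hτmem k).2.ne]
    exact abs_lamMin_smul_one_sub_smul_sub_le hn _ _ _
  have hd : Tendsto d atTop (𝓝 0) := by
    simpa [d, Pi.div_def] using (hτ0.div_const n).div (tendsto_const_nhds.sub hτ0) (by norm_num)
  have hinv : Tendsto (fun k => (P k)⁻¹) atTop (𝓝 Pstar⁻¹) :=
    (continuousAt_matrix_inv _
      (NormedRing.inverse_continuousAt (Units.mk0 _ hPstar.det_pos.ne'))).tendsto.comp hconv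
  have hF : Continuous F := by fun_prop
  refine squeeze_zero_norm hgap ?_
  simpa using hd.abs.mul ((hF.tendsto _).comp hinv)

/-- Asymptotic tightness: if the regularized fixed points
converge to a positive definite limit as `τ_k → 0`, then the certified squared
gap `γ^(τ_k)/(1−τ_k) − L(P^(τ_k))` tends to `0`. -/
theorem gap_tends_to_zero {n m : ℕ} (hn : 0 < n) (hm : 0 < m)
    (σ : ℝ) (hσ : 0 < σ)
    (A Abar : Matrix (Fin n) (Fin n) ℝ) (B Bbar : Matrix (Fin n) (Fin m) ℝ)
    (hR0 : (Bᵀ * B + σ ^ 2 • (Bbarᵀ * Bbar)).PosDef)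
    (τ : ℕ → ℝ) (hτmem : ∀ k, τ k ∈ Set.Ioo (0 : ℝ) 1)
    (hτ0 : Filter.Tendsto τ Filter.atTop (nhds 0))
    (P : ℕ → Matrix (Fin n) (Fin n) ℝ)
    (hPpd : ∀ k, (P k).PosDef) (hPtr : ∀ k, (P k).trace = 1)
    (hfix : ∀ k, PhiHat σ A Abar B Bbar (τ k) (P k) = P k)
    (γ : ℕ → ℝ)
    (hγ : ∀ k, γ k = Matrix.trace ((1 - τ k) • Phi σ A Abar B Bbar (P k)
      + (τ k / (n : ℝ)) • (1 : Matrix (Fin n) (Fin n) ℝ)))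
    (Pstar : Matrix (Fin n) (Fin n) ℝ) (hPstar : Pstar.PosDef)
    (hconv : Filter.Tendsto P Filter.atTop (nhds Pstar)) :
    Filter.Tendsto (fun k => γ k / (1 - τ k) - Lval σ A Abar B Bbar (P k))
      Filter.atTop (nhds 0) :=
  gap_tends_to_zero_general hn σ A Abar B Bbar τ hτmem hτ0 P hPpd hPtr hfix γ hγ Pstar hPstar hconv

end SCS
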